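/- Let G = (V,E) be a graph. Then D(G,x) = ∑_{W ⊆ V} (−1)^{|W|} (1+x)^{|V ∖ N[W]|}, where N[W] is the closed neighborhood of W in G. -/

import Mathlib

open Finset Polynomial

variable {V : Type*}

def dominates (H : SimpleGraph V) (W : Finset V) : Prop :=
  ∀ v : V, v ∈ W ∨ ∃ u ∈ W, H.Adj u v

open scoped Classical in
noncomputable def domPoly [Fintype V] (H : SimpleGraph V) : Polynomial ℤ :=
  ∑ W ∈ Finset.univ.powerset.filter (fun W => dominates H W), X ^ W.card

open scoped Classical in
noncomputable def compOrders [Fintype V] (H : SimpleGraph V) : Multiset ℕ :=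
  (Finset.univ : Finset H.ConnectedComponent).val.map (fun c => Nat.card c.supp)

/-
Write `U(T) = V ∖ N[T]`. A set `T` dominates iff `U(T) = ∅`, and `∑_{W ⊆ U(T)} (-1)^|W|` is the
indicator of that event. Since `W ⊆ U(T) ↔ T ⊆ U(W)` (both say that no vertex of `W` is equal or
adjacent to one of `T`), swapping the two sums turns the inner sum into
`∑_{T ⊆ U(W)} x^|T| = (1 + x)^|U(W)|`.
-/

namespace Finset

theorem sum_powerset_pow_card {ι R : Type*} [CommSemiring R] (s : Finset ι) (x : R) :
    ∑ t ∈ s.powerset, x ^ #t = (1 + x) ^ #s := by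
  simpa [add_comm] using sum_pow_mul_eq_add_pow x 1 s

theorem sum_powerset_neg_one_pow_card_eq_ite {ι R : Type*} [Ring R] [DecidableEq ι]
    (s : Finset ι) : ∑ t ∈ s.powerset, (-1 : R) ^ #t = if s = ∅ then 1 else 0 := by
  exact_mod_cast congrArg (Int.cast : ℤ → R) (sum_powerset_neg_one_pow_card (x := s))

end Finset

namespace SimpleGraph

variable [Fintype V] [DecidableEq V] (G : SimpleGraph V) [DecidableRel G.Adj]

def undominated (W : Finset V) : Finset V :=
  univ.filter fun x => ¬ (x ∈ W ∨ ∃ u ∈ W, G.Adj u x)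

variable {G}

theorem undominated_eq_empty_iff {W : Finset V} : G.undominated W = ∅ ↔ dominates G W := by
  simp [undominated, filter_eq_empty_iff, dominates, or_iff_not_imp_left]

theorem subset_undominated_comm {T W : Finset V} :
    T ⊆ G.undominated W ↔ W ⊆ G.undominated T := by
  simp only [undominated, subset_iff, mem_filter, mem_univ, true_and, not_or, not_exists, not_and]
  grind [G.adj_symm]

theorem sum_dominates_pow_card {R : Type*} [CommRing R] [DecidablePred (dominates G)] (x : R) :
    ∑ T ∈ univ.powerset.filter (dominates G), x ^ #T
      = ∑ W ∈ univ.powerset, (-1) ^ #W * (1 + x) ^ #(G.undominated W) := by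
  calc ∑ T ∈ univ.powerset.filter (dominates G), x ^ #T
      = ∑ T ∈ univ.powerset, x ^ #T * ∑ W ∈ (G.undominated T).powerset, (-1 : R) ^ #W := by
        rw [sum_filter]
        refine sum_congr rfl fun T _ => ?_
        simp [sum_powerset_neg_one_pow_card_eq_ite, undominated_eq_empty_iff]
    _ = ∑ W ∈ univ.powerset, ∑ T ∈ (G.undominated W).powerset, x ^ #T * (-1 : R) ^ #W := by
        simp_rw [mul_sum]
        exact sum_comm' fun T W => by
          simp only [mem_powerset, subset_univ, true_and, and_true, subset_undominated_comm (T := T)]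
    _ = _ := by simp_rw [mul_comm (x ^ _), ← mul_sum, sum_powerset_pow_card]

end SimpleGraph

open scoped Classical in
/-- inclusion–exclusion:
`D(G,x) = ∑_{W ⊆ V} (-1)^|W| (1+x)^{|V ∖ N[W]|}`. -/
theorem stmt_14 [Fintype V] [DecidableEq V] (G : SimpleGraph V) :
    domPoly G
      = ∑ W ∈ (Finset.univ : Finset V).powerset,
          (-1 : Polynomial ℤ) ^ W.card *
            (1 + X) ^ (Finset.univ.filter
              (fun x : V => ¬ (x ∈ W ∨ ∃ u ∈ W, G.Adj u x))).card :=
  G.sum_dominates_pow_card X
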